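/- arXiv:1705.04121 — 2 statements merged into one kernel-verified Lean document; each statement's English description precedes it below -/
import Mathlib

section
/- With D = {ξ ∈ ℚ_p(i) : |ξ|_p < 1} and ξ₁ ⊕ ξ₂ := (ξ₁+ξ₂)/(1−ξ̄₁ξ₂), (D, ⊕, 0) is a left loop: for all a, b ∈ D the equation a ⊕ x = b has a unique solution x ∈ D. -/
/-!
Since `-1` is not a square mod `p`, `|r² + s²| = max(|r|, |s|)²` for `r, s ∈ ℚ_p`. Writing
`ξ = r + s i`, both `ξ` and `ξ̄ = r - s i` have norm at most `max(|r|, |s|)` while their product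
is `r² + s²`, so conjugation is an isometry. Hence `ā` lies in the unit disk together with `a`,
and `a ⊕ x = b` becomes the linear equation `x (1 + b ā) = b - a`, whose coefficient `1 + b ā`
has norm `1` by the ultrametric inequality; its solution `(b - a) / (1 + b ā)` lies in the disk.
-/

/-- The Kikkawa-type loop operation `ξ₁ ⊕ ξ₂ = (ξ₁ + ξ₂)/(1 - ξ̄₁ ξ₂)` on the unit
disk of `ℚ_p(i)`, where the bar is the conjugation `σ`. -/
noncomputable def oplus {p : ℕ} [Fact p.Prime] {K : Type*} [NormedField K]
    [NormedAlgebra ℚ_[p] K] (σ : K ≃ₐ[ℚ_[p]] K) (x y : K) : K :=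
  (x + y) / (1 - σ x * y)

open IsUltrametricDist

namespace PadicInt

variable {p : ℕ} [Fact p.Prime]

theorem norm_one_add_sq (hp : p % 4 = 3) (t : ℤ_[p]) : ‖1 + t ^ 2‖ = 1 := by
  refine (norm_le_one _).eq_or_lt.resolve_right fun hlt => ?_
  have hker : toZMod (1 + t ^ 2) = 0 := by
    rw [← RingHom.mem_ker, ker_toZMod, IsLocalRing.mem_maximalIdeal]
    exact mem_nonunits.mpr hlt
  have hsq : IsSquare (-1 : ZMod p) :=
    ⟨toZMod t, by rw [map_add, map_one, map_pow] at hker; linear_combination -hker⟩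
  exact ZMod.exists_sq_eq_neg_one_iff.mp hsq hp

end PadicInt

namespace Padic

variable {p : ℕ} [Fact p.Prime]

theorem norm_sq_add_sq (hp : p % 4 = 3) (r s : ℚ_[p]) :
    ‖r ^ 2 + s ^ 2‖ = max ‖r‖ ‖s‖ ^ 2 := by
  wlog hrs : ‖r‖ ≤ ‖s‖ generalizing r s
  · rw [add_comm, max_comm]; exact this s r (le_of_not_ge hrs)
  rw [max_eq_right hrs]
  rcases eq_or_ne s 0 with rfl | hs
  · simp_all
  have hts : ‖r / s‖ ≤ 1 := by
    rw [norm_div, div_le_one (norm_pos_iff.mpr hs)]; exact hrs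
  have hfactor : r ^ 2 + s ^ 2 = s ^ 2 * (1 + (r / s) ^ 2) := by field_simp; ring
  have hunit : ‖1 + (r / s) ^ 2‖ = 1 := PadicInt.norm_one_add_sq hp ⟨r / s, hts⟩
  rw [hfactor, norm_mul, norm_pow, hunit, mul_one]

end Padic

theorem Algebra.exists_eq_algebraMap_add_algebraMap_mul {R A : Type*} [CommRing R] [CommRing A]
    [Algebra R A] {i : A} (hi : i ^ 2 = -1) (hgen : Algebra.adjoin R {i} = ⊤) (x : A) :
    ∃ r s : R, x = algebraMap R A r + algebraMap R A s * i := by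
  have hx : x ∈ Algebra.adjoin R {i} := hgen ▸ Algebra.mem_top
  induction hx using Algebra.adjoin_induction with
  | mem x hx => exact ⟨0, 1, by simp_all⟩
  | algebraMap r => exact ⟨r, 0, by simp⟩
  | add x y _ _ hx hy =>
    obtain ⟨r, s, rfl⟩ := hx
    obtain ⟨r', s', rfl⟩ := hy
    exact ⟨r + r', s + s', by simp only [map_add]; ring⟩
  | mul x y _ _ hx hy =>
    obtain ⟨r, s, rfl⟩ := hx
    obtain ⟨r', s', rfl⟩ := hy
    refine ⟨r * r' - s * s', r * s' + s * r', ?_⟩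
    simp only [map_add, map_sub, map_mul]
    linear_combination (algebraMap R A s * algebraMap R A s') * hi

section Ultrametric

variable {K : Type*} [NormedField K] [IsUltrametricDist K]

theorem norm_algebraMap_add_algebraMap_mul_le {F : Type*} [NormedField F] [NormedAlgebra F K]
    (r s : F) {j : K} (hj : ‖j‖ = 1) :
    ‖algebraMap F K r + algebraMap F K s * j‖ ≤ max ‖r‖ ‖s‖ := by
  simpa only [norm_mul, hj, mul_one, norm_algebraMap'] using
    norm_add_le_max (algebraMap F K r) (algebraMap F K s * j)

theorem norm_one_add_eq_one {z : K} (hz : ‖z‖ < 1) : ‖1 + z‖ = 1 := by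
  rw [norm_add_eq_max_of_norm_ne_norm (by rw [norm_one]; exact hz.ne'), norm_one,
    max_eq_left hz.le]

theorem norm_one_sub_eq_one {z : K} (hz : ‖z‖ < 1) : ‖1 - z‖ = 1 := by
  rw [sub_eq_add_neg]; exact norm_one_add_eq_one (by rwa [norm_neg])

theorem existsUnique_norm_lt_one_add_div_one_sub_mul_eq {a b u : K} (ha : ‖a‖ < 1)
    (hb : ‖b‖ < 1) (hu : ‖u‖ < 1) :
    ∃! x : K, ‖x‖ < 1 ∧ (a + x) / (1 - u * x) = b := by
  have mul_lt_one {x y : K} (hx : ‖x‖ < 1) (hy : ‖y‖ < 1) : ‖x * y‖ < 1 := by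
    rw [norm_mul]; exact mul_lt_one_of_nonneg_of_lt_one_left (norm_nonneg x) hx hy.le
  have ne_zero {z : K} (hz : ‖z‖ = 1) : z ≠ 0 := by rintro rfl; simp at hz
  have hden {x : K} (hx : ‖x‖ < 1) : 1 - u * x ≠ 0 :=
    ne_zero (norm_one_sub_eq_one (mul_lt_one hu hx))
  have hbu := norm_one_add_eq_one (mul_lt_one hb hu)
  set x₀ := (b - a) / (1 + b * u) with hx₀
  have hx₀_lt : ‖x₀‖ < 1 := by
    rw [hx₀, norm_div, hbu, div_one, sub_eq_add_neg]
    exact (norm_add_le_max b (-a)).trans_lt (max_lt hb (by rwa [norm_neg]))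
  refine ⟨x₀, ⟨hx₀_lt, ?_⟩, fun x ⟨hx, hxb⟩ => ?_⟩
  · rw [div_eq_iff (hden hx₀_lt), hx₀]
    field_simp [ne_zero hbu]
    ring
  · rw [div_eq_iff (hden hx)] at hxb
    rw [hx₀, eq_div_iff (ne_zero hbu)]
    linear_combination hxb

end Ultrametric

theorem norm_algEquiv_apply_eq_of_sq_eq_neg_one {p : ℕ} [Fact p.Prime] (hp : p % 4 = 3)
    {K : Type*} [NormedField K] [NormedAlgebra ℚ_[p] K] {i : K} (hi : i ^ 2 = -1)
    (hgen : Algebra.adjoin ℚ_[p] {i} = ⊤) (σ : K ≃ₐ[ℚ_[p]] K) (hσ : σ i = -i) (x : K) :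
    ‖σ x‖ = ‖x‖ := by
  have : IsUltrametricDist K := .of_normedAlgebra ℚ_[p]
  obtain ⟨r, s, rfl⟩ := Algebra.exists_eq_algebraMap_add_algebraMap_mul hi hgen x
  have hi_norm : ‖i‖ = 1 := by
    have : ‖i‖ ^ 2 = 1 := by rw [← norm_pow, hi, norm_neg, norm_one]
    exact (pow_eq_one_iff_of_nonneg (norm_nonneg i) two_ne_zero).mp this
  set R := algebraMap ℚ_[p] K r
  set S := algebraMap ℚ_[p] K s
  rw [show σ (R + S * i) = R + S * -i by simp [R, S, hσ]]
  have hprod : ‖R + S * -i‖ * ‖R + S * i‖ = max ‖r‖ ‖s‖ ^ 2 := by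
    rw [← norm_mul, ← Padic.norm_sq_add_sq hp, ← norm_algebraMap' K (r ^ 2 + s ^ 2), map_add,
      map_pow, map_pow]
    congr 1
    linear_combination (-S ^ 2) * hi
  nlinarith [norm_algebraMap_add_algebraMap_mul_le r s hi_norm,
    norm_algebraMap_add_algebraMap_mul_le r s (j := -i) (by rwa [norm_neg]),
    norm_nonneg (R + S * i), norm_nonneg (R + S * -i)]

theorem oplus_left_loop_general
    {p : ℕ} [Fact p.Prime] (hp : p % 4 = 3)
    {K : Type*} [NormedField K] [NormedAlgebra ℚ_[p] K]
    (i : K) (hi : i ^ 2 = -1) (hgen : Algebra.adjoin ℚ_[p] {i} = ⊤)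
    (σ : K ≃ₐ[ℚ_[p]] K) (hσ : σ i = -i) :
    ∀ a b : K, ‖a‖ < 1 → ‖b‖ < 1 → ∃! x : K, ‖x‖ < 1 ∧ oplus σ a x = b := by
  intro a b ha hb
  have : IsUltrametricDist K := .of_normedAlgebra ℚ_[p]
  have hσa : ‖σ a‖ < 1 := by
    rwa [norm_algEquiv_apply_eq_of_sq_eq_neg_one hp hi hgen σ hσ]
  exact existsUnique_norm_lt_one_add_div_one_sub_mul_eq ha hb hσa

/-- With `D = {ξ ∈ ℚ_p(i) : |ξ|_p < 1}` and `ξ₁ ⊕ ξ₂ = (ξ₁+ξ₂)/(1-ξ̄₁ξ₂)`,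
`(D, ⊕, 0)` is a left loop: for all `a, b ∈ D` the equation `a ⊕ x = b` has a
unique solution `x ∈ D`. -/
theorem oplus_left_loop
    {p : ℕ} [Fact p.Prime] (hp : p % 4 = 3)
    {K : Type*} [NormedField K] [NormedAlgebra ℚ_[p] K] [CompleteSpace K]
    (i : K) (hi : i ^ 2 = -1) (hgen : Algebra.adjoin ℚ_[p] {i} = ⊤)
    (σ : K ≃ₐ[ℚ_[p]] K) (hσ : σ i = -i) :
    ∀ a b : K, ‖a‖ < 1 → ‖b‖ < 1 → ∃! x : K, ‖x‖ < 1 ∧ oplus σ a x = b :=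
  oplus_left_loop_general hp i hi hgen σ hσ
end

section
/- For ξ₁, ξ₂ in D = {ξ ∈ ℚ_p(i) : |ξ|_p < 1}, the inner deviation factor u := (1 − ξ₁ξ̄₂)/(1 − ξ̄₁ξ₂) satisfies ū = u^{−1} and |u|_p = 1; consequently the map ξ ↦ u·ξ is a bijection of D fixing 0, and the left loop (D, ⊕) satisfies the left inverse property λ_{ξ₁⊕ξ₂}^{−1}λ_{ξ₁}λ_{ξ₂}(ξ) = u·ξ. -/
theorem AlgEquiv.norm_map_of_isAlgebraic {K L : Type*} [NontriviallyNormedField K]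
    [CompleteSpace K] [IsUltrametricDist K] [NormedField L] [NormedAlgebra K L]
    [Algebra.IsAlgebraic K L] (σ : L ≃ₐ[K] L) (x : L) : ‖σ x‖ = ‖x‖ := by
  rw [NormedAlgebra.norm_eq_spectralNorm K, NormedAlgebra.norm_eq_spectralNorm K,
    ← spectralNorm_eq_of_equiv σ]

theorem Algebra.isIntegral_of_adjoin_singleton_eq_top {R A : Type*} [CommRing R] [CommRing A]
    [Algebra R A] {x : A} (hx : IsIntegral R x) (h : Algebra.adjoin R {x} = ⊤) :
    Algebra.IsIntegral R A :=
  ⟨fun _ => adjoin_le_integralClosure hx (h ▸ Algebra.mem_top)⟩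

theorem isIntegral_of_sq_eq_neg_one {R A : Type*} [CommRing R] [Ring A] [Algebra R A] {i : A}
    (hi : i ^ 2 = -1) : IsIntegral R i :=
  ⟨Polynomial.X ^ 2 + 1, Polynomial.monic_X_pow_add_C 1 two_ne_zero, by simp [hi]⟩

theorem AlgEquiv.involutive_of_adjoin_eq_top {R A : Type*} [CommRing R] [Ring A] [Algebra R A]
    {i : A} (hgen : Algebra.adjoin R {i} = ⊤) (σ : A ≃ₐ[R] A) (hσ : σ (σ i) = i) :
    Function.Involutive σ := by
  have : (σ : A →ₐ[R] A).comp σ = AlgHom.id R A :=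
    AlgHom.ext_of_adjoin_eq_top hgen (by simp [Set.EqOn, hσ])
  exact fun x => DFunLike.congr_fun this x

theorem bijOn_mul_left_of_norm_eq_one {F : Type*} [NormedDivisionRing F] {u : F} (hu : ‖u‖ = 1)
    (r : ℝ) : Set.BijOn (fun ξ => u * ξ) {ξ : F | ‖ξ‖ < r} {ξ : F | ‖ξ‖ < r} :=
  (Equiv.mulLeft₀ u (norm_ne_zero_iff.1 (hu ▸ one_ne_zero))).bijOn fun ξ => by
    simp [norm_mul, hu]

section

variable {p : ℕ} [Fact p.Prime] {K : Type*} [NormedField K] [NormedAlgebra ℚ_[p] K]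
  {σ : K ≃ₐ[ℚ_[p]] K}

theorem oplus_oplus_eq (hσ : Function.Involutive σ) {a b c : K} (hab : 1 - σ a * b ≠ 0)
    (hbc : 1 - σ b * c ≠ 0) :
    oplus σ a (oplus σ b c) = oplus σ (oplus σ a b) ((1 - a * σ b) / (1 - σ a * b) * c) := by
  have hab' : 1 - a * σ b ≠ 0 := by
    simpa [hσ a] using (map_ne_zero σ).2 hab
  have hσab : σ (oplus σ a b) = (σ a + σ b) / (1 - a * σ b) := by
    simp [oplus, hσ a]
  rw [oplus.eq_1 σ (oplus σ a b), hσab]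
  simp only [oplus]
  -- The common denominator `1 - σ a * b - σ a * c - σ b * c` may vanish (both sides are then `0`),
  -- so the inner denominators are cancelled instead of clearing all denominators.
  rw [← mul_assoc, div_mul_div_cancel₀ hab', div_mul_eq_mul_div (σ a + σ b),
    div_mul_eq_mul_div (1 - a * σ b), ← add_div, sub_div' hab, add_div' _ _ _ hbc,
    mul_div_assoc', sub_div' hbc, div_div_div_cancel_right₀ hbc, div_div_div_cancel_right₀ hab]
  ring

end

theorem oplus_inner_deviation_general
    {p : ℕ} [Fact p.Prime]
    {K : Type*} [NormedField K] [NormedAlgebra ℚ_[p] K]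
    (i : K) (hi : i ^ 2 = -1) (hgen : Algebra.adjoin ℚ_[p] {i} = ⊤)
    (σ : K ≃ₐ[ℚ_[p]] K) (hσ : σ i = -i)
    (ξ₁ ξ₂ : K) (h₁ : ‖ξ₁‖ < 1) (h₂ : ‖ξ₂‖ < 1) :
    σ ((1 - ξ₁ * σ ξ₂) / (1 - σ ξ₁ * ξ₂)) = ((1 - ξ₁ * σ ξ₂) / (1 - σ ξ₁ * ξ₂))⁻¹ ∧
    ‖(1 - ξ₁ * σ ξ₂) / (1 - σ ξ₁ * ξ₂)‖ = 1 ∧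
    Set.BijOn (fun ξ : K => ((1 - ξ₁ * σ ξ₂) / (1 - σ ξ₁ * ξ₂)) * ξ)
      {ξ : K | ‖ξ‖ < 1} {ξ : K | ‖ξ‖ < 1} ∧
    ((1 - ξ₁ * σ ξ₂) / (1 - σ ξ₁ * ξ₂)) * 0 = 0 ∧
    (∀ ξ : K, ‖ξ‖ < 1 →
      oplus σ ξ₁ (oplus σ ξ₂ ξ) =
        oplus σ (oplus σ ξ₁ ξ₂) (((1 - ξ₁ * σ ξ₂) / (1 - σ ξ₁ * ξ₂)) * ξ)) := by
  have : Algebra.IsIntegral ℚ_[p] K :=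
    Algebra.isIntegral_of_adjoin_singleton_eq_top (isIntegral_of_sq_eq_neg_one hi) hgen
  have hσσ : Function.Involutive σ :=
    σ.involutive_of_adjoin_eq_top hgen (by rw [hσ, map_neg, hσ, neg_neg])
  have hden : ∀ {x y : K}, ‖x‖ < 1 → ‖y‖ < 1 → 1 - σ x * y ≠ 0 := fun {x y} hx hy => by
    refine sub_ne_zero.2 (ne_of_apply_ne norm ?_)
    rw [norm_one, norm_mul, σ.norm_map_of_isAlgebraic]
    exact (mul_lt_one_of_nonneg_of_lt_one_left (norm_nonneg x) hx hy.le).ne'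
  have hσd : σ (1 - σ ξ₁ * ξ₂) = 1 - ξ₁ * σ ξ₂ := by simp [hσσ ξ₁]
  have hu : ‖(1 - ξ₁ * σ ξ₂) / (1 - σ ξ₁ * ξ₂)‖ = 1 := by
    rw [← hσd, norm_div, σ.norm_map_of_isAlgebraic, div_self (norm_ne_zero_iff.2 (hden h₁ h₂))]
  refine ⟨?_, hu, bijOn_mul_left_of_norm_eq_one hu 1, mul_zero _,
    fun ξ hξ => oplus_oplus_eq hσσ (hden h₁ h₂) (hden h₂ hξ)⟩
  rw [← hσd, map_div₀, hσσ, inv_div]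

/-- For `ξ₁, ξ₂` in `D = {ξ ∈ ℚ_p(i) : |ξ|_p < 1}`, the inner deviation factor
`u = (1 - ξ₁ ξ̄₂)/(1 - ξ̄₁ ξ₂)` satisfies `ū = u⁻¹` and `|u|_p = 1`; consequently
`ξ ↦ u·ξ` is a bijection of `D` fixing `0`, and the left loop `(D, ⊕)` satisfies
`λ_{ξ₁⊕ξ₂}⁻¹ λ_{ξ₁} λ_{ξ₂} (ξ) = u·ξ`, i.e.
`ξ₁ ⊕ (ξ₂ ⊕ ξ) = (ξ₁ ⊕ ξ₂) ⊕ (u·ξ)`. -/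
theorem oplus_inner_deviation
    {p : ℕ} [Fact p.Prime] (hp : p % 4 = 3)
    {K : Type*} [NormedField K] [NormedAlgebra ℚ_[p] K] [CompleteSpace K]
    (i : K) (hi : i ^ 2 = -1) (hgen : Algebra.adjoin ℚ_[p] {i} = ⊤)
    (σ : K ≃ₐ[ℚ_[p]] K) (hσ : σ i = -i)
    (ξ₁ ξ₂ : K) (h₁ : ‖ξ₁‖ < 1) (h₂ : ‖ξ₂‖ < 1) :
    σ ((1 - ξ₁ * σ ξ₂) / (1 - σ ξ₁ * ξ₂)) = ((1 - ξ₁ * σ ξ₂) / (1 - σ ξ₁ * ξ₂))⁻¹ ∧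
    ‖(1 - ξ₁ * σ ξ₂) / (1 - σ ξ₁ * ξ₂)‖ = 1 ∧
    Set.BijOn (fun ξ : K => ((1 - ξ₁ * σ ξ₂) / (1 - σ ξ₁ * ξ₂)) * ξ)
      {ξ : K | ‖ξ‖ < 1} {ξ : K | ‖ξ‖ < 1} ∧
    ((1 - ξ₁ * σ ξ₂) / (1 - σ ξ₁ * ξ₂)) * 0 = 0 ∧
    (∀ ξ : K, ‖ξ‖ < 1 →
      oplus σ ξ₁ (oplus σ ξ₂ ξ) =
        oplus σ (oplus σ ξ₁ ξ₂) (((1 - ξ₁ * σ ξ₂) / (1 - σ ξ₁ * ξ₂)) * ξ)) :=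
  oplus_inner_deviation_general i hi hgen σ hσ ξ₁ ξ₂ h₁ h₂
end
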